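/- arXiv:2605.12924 — 8 statements merged into one kernel-verified Lean document; each statement's English description precedes it below -/
import Mathlib

section
/- Let (Ω, 𝓕, μ) be a probability space, E a measurable space, T_rct, T_synth : Ω → Bool measurable, and W : Ω → E measurable. Suppose T_rct is independent of the pair ω ↦ (T_synth ω, W ω) under μ and μ({ω | T_rct ω = true}) = 1/2. Then the acceptance event A = {ω | T_rct ω = T_synth ω} is independent of W: for every measurable set S ⊆ E, μ(A ∩ W⁻¹(S)) = μ(A) · μ(W⁻¹(S)). -/
/-!
Split the event `{T_rct = T_synth} ∩ {W ∈ S}` according to the value `b` of `T_rct`: the piece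
with `T_rct = b` is `{T_rct = b} ∩ {(T_synth, W) ∈ {b} × S}`, whose probability is
`μ(T_rct = b) · μ(T_synth = b, W ∈ S) = ½ · μ(T_synth = b, W ∈ S)` by independence and balance.
Summing over `b` gives `½ · μ(W ∈ S)`; the case `S = univ` shows `μ(A) = ½`.
-/

open MeasureTheory ProbabilityTheory

section

variable {Ω : Type*} [MeasurableSpace Ω]

theorem measure_inter_preimage_true_add_false (μ : Measure Ω) {f : Ω → Bool}
    (hf : Measurable f) (s : Set Ω) :
    μ (s ∩ f ⁻¹' {true}) + μ (s ∩ f ⁻¹' {false}) = μ s := by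
  have hdiff : s \ f ⁻¹' {true} = s ∩ f ⁻¹' {false} := by
    ext ω
    simp
  rw [← hdiff, measure_inter_add_sdiff s (hf (measurableSet_singleton true))]

theorem measure_preimage_eq_half_of_measure_true_eq_half (μ : Measure Ω) [IsProbabilityMeasure μ]
    {X : Ω → Bool} (hX : Measurable X) (hbal : μ {ω | X ω = true} = 1/2) (b : Bool) :
    μ (X ⁻¹' {b}) = 1/2 := by
  cases b
  · have hsum := measure_inter_preimage_true_add_false μ hX Set.univ
    rw [Set.univ_inter, Set.univ_inter, measure_univ] at hsum
    rw [show X ⁻¹' {true} = {ω | X ω = true} from rfl, hbal] at hsum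
    rw [← ENNReal.add_right_inj (a := 1/2) (by norm_num), hsum, ENNReal.add_halves]
  · exact hbal

theorem ProbabilityTheory.IndepFun.measure_inter_preimage_eq_half_mul {β : Type*}
    [MeasurableSpace β] {μ : Measure Ω} [IsProbabilityMeasure μ] {X : Ω → Bool} {Y : Ω → β}
    (hindep : IndepFun X Y μ) (hX : Measurable X) (hbal : μ {ω | X ω = true} = 1/2)
    (b : Bool) {B : Set β} (hB : MeasurableSet B) :
    μ (X ⁻¹' {b} ∩ Y ⁻¹' B) = 1/2 * μ (Y ⁻¹' B) := by
  rw [hindep.measure_inter_preimage_eq_mul _ _ (measurableSet_singleton b) hB,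
    measure_preimage_eq_half_of_measure_true_eq_half μ hX hbal b]

theorem measure_eq_inter_preimage_eq_half_mul {E : Type*} [MeasurableSpace E]
    {μ : Measure Ω} [IsProbabilityMeasure μ] {X Z : Ω → Bool} {W : Ω → E}
    (hX : Measurable X) (hZ : Measurable Z)
    (hindep : IndepFun X (fun ω => (Z ω, W ω)) μ) (hbal : μ {ω | X ω = true} = 1/2)
    {S : Set E} (hS : MeasurableSet S) :
    μ ({ω | X ω = Z ω} ∩ W ⁻¹' S) = 1/2 * μ (W ⁻¹' S) := by
  have hpiece (b : Bool) : {ω | X ω = Z ω} ∩ W ⁻¹' S ∩ X ⁻¹' {b}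
      = X ⁻¹' {b} ∩ (fun ω => (Z ω, W ω)) ⁻¹' ({b} ×ˢ S) := by
    ext ω
    simp only [Set.mem_inter_iff, Set.mem_ofPred_eq, Set.mem_preimage, Set.mem_singleton_iff,
      Set.mem_prod]
    grind
  have hhalf (b : Bool) := hindep.measure_inter_preimage_eq_half_mul hX hbal b
    ((measurableSet_singleton b).prod hS)
  calc μ ({ω | X ω = Z ω} ∩ W ⁻¹' S)
      = 1/2 * (μ (W ⁻¹' S ∩ Z ⁻¹' {true}) + μ (W ⁻¹' S ∩ Z ⁻¹' {false})) := by
        rw [← measure_inter_preimage_true_add_false μ hX, hpiece, hpiece, hhalf, hhalf, mul_add,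
          Set.mk_preimage_prod, Set.mk_preimage_prod, Set.inter_comm (Z ⁻¹' _),
          Set.inter_comm (Z ⁻¹' _)]
    _ = 1/2 * μ (W ⁻¹' S) := by rw [measure_inter_preimage_true_add_false μ hZ]

end

theorem acceptance_indep_of_W_general {Ω E : Type*} [MeasurableSpace Ω] [MeasurableSpace E]
    (μ : Measure Ω) [IsProbabilityMeasure μ]
    (Trct Tsynth : Ω → Bool) (W : Ω → E)
    (hTrct : Measurable Trct) (hTsynth : Measurable Tsynth)
    (hindep : IndepFun Trct (fun ω => (Tsynth ω, W ω)) μ)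
    (hbal : μ {ω | Trct ω = true} = 1/2) :
    ∀ S : Set E, MeasurableSet S →
      μ ({ω | Trct ω = Tsynth ω} ∩ W ⁻¹' S)
        = μ {ω | Trct ω = Tsynth ω} * μ (W ⁻¹' S) := by
  intro S hS
  have hA : μ {ω | Trct ω = Tsynth ω} = 1/2 := by
    simpa using measure_eq_inter_preimage_eq_half_mul hTrct hTsynth hindep hbal MeasurableSet.univ
  rw [measure_eq_inter_preimage_eq_half_mul hTrct hTsynth hindep hbal hS, hA]

theorem acceptance_indep_of_W {Ω E : Type*} [MeasurableSpace Ω] [MeasurableSpace E]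
    (μ : Measure Ω) [IsProbabilityMeasure μ]
    (Trct Tsynth : Ω → Bool) (W : Ω → E)
    (hTrct : Measurable Trct) (hTsynth : Measurable Tsynth) (hW : Measurable W)
    (hindep : IndepFun Trct (fun ω => (Tsynth ω, W ω)) μ)
    (hbal : μ {ω | Trct ω = true} = 1/2) :
    ∀ S : Set E, MeasurableSet S →
      μ ({ω | Trct ω = Tsynth ω} ∩ W ⁻¹' S)
        = μ {ω | Trct ω = Tsynth ω} * μ (W ⁻¹' S) :=
  acceptance_indep_of_W_general μ Trct Tsynth W hTrct hTsynth hindep hbal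
end

section
/- Let (Ω, 𝓕, μ) be a probability space, T_rct, T_synth : Ω → Bool measurable, and Y : Ω → ℝ integrable. Suppose T_rct is independent of the pair ω ↦ (T_synth ω, Y ω) under μ and μ({ω | T_rct ω = true}) = 1/2. Then, with A = {ω | T_rct ω = T_synth ω}, the expectation of Y is preserved under conditioning on acceptance: ∫ Y d(ProbabilityTheory.cond μ A) = ∫ Y dμ. -/
/-!
Split the acceptance event along the common value `b` of the two assignments. Since `Trct` is
independent of `(Tsynth, Y)`, `E[Y; Trct = b, Tsynth = b] = P(Trct = b) E[Y; Tsynth = b]`, and with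
`P(Trct = b) = 1/2` for both `b` these sum to `E[Y; A] = E[Y] / 2`. The case `Y = 1` gives
`P(A) = 1/2`, so the two factors `1/2` cancel in `E[Y | A] = E[Y; A] / P(A)`.
-/

open MeasureTheory ProbabilityTheory

namespace ProbabilityTheory

variable {Ω β : Type*} [MeasurableSpace Ω] {μ : Measure Ω} [MeasurableSpace β]
  {X S : Ω → β} {Y : Ω → ℝ}

theorem setIntegral_preimage_inter_eq_mul_of_indepFun
    (hindep : IndepFun X (fun ω => (S ω, Y ω)) μ) (hX : Measurable X) (hS : Measurable S)
    (hY : AEStronglyMeasurable Y μ) {s t : Set β} (hs : MeasurableSet s) (ht : MeasurableSet t) :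
    ∫ ω in X ⁻¹' s ∩ S ⁻¹' t, Y ω ∂μ = μ.real (X ⁻¹' s) * ∫ ω in S ⁻¹' t, Y ω ∂μ := by
  have hfac : ∫ ω, (X ⁻¹' s).indicator 1 ω * (S ⁻¹' t).indicator Y ω ∂μ
      = (∫ ω, (X ⁻¹' s).indicator 1 ω ∂μ) * ∫ ω, (S ⁻¹' t).indicator Y ω ∂μ :=
    (hindep.comp (measurable_one.indicator hs)
      (measurable_snd.indicator (measurable_fst ht))).integral_fun_mul_eq_mul_integral
      ((measurable_one.indicator (hX hs)).aestronglyMeasurable) (hY.indicator (hS ht))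
  simp only [← Set.inter_indicator_mul, Pi.one_apply, one_mul] at hfac
  rwa [integral_indicator_one (hX hs), integral_indicator (hS ht),
    integral_indicator ((hX hs).inter (hS ht))] at hfac

theorem sum_setIntegral_preimage_singleton [Fintype β] [MeasurableSingletonClass β]
    (hS : Measurable S) (hY : Integrable Y μ) :
    ∑ b, ∫ ω in S ⁻¹' {b}, Y ω ∂μ = ∫ ω, Y ω ∂μ := by
  rw [← integral_iUnion_fintype (fun b => hS (measurableSet_singleton b))
    (pairwise_disjoint_fiber S) (fun _ => hY.integrableOn)]
  simp only [← Set.preimage_iUnion, Set.iUnion_of_singleton, Set.preimage_univ, setIntegral_univ]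

theorem setIntegral_eq_sum_of_indepFun [Fintype β] [MeasurableSingletonClass β]
    (hindep : IndepFun X (fun ω => (S ω, Y ω)) μ) (hX : Measurable X) (hS : Measurable S)
    (hY : Integrable Y μ) :
    ∫ ω in {ω | X ω = S ω}, Y ω ∂μ = ∑ b, μ.real (X ⁻¹' {b}) * ∫ ω in S ⁻¹' {b}, Y ω ∂μ := by
  have hfibers : {ω | X ω = S ω} = ⋃ b, X ⁻¹' {b} ∩ S ⁻¹' {b} := by
    ext ω
    simp [eq_comm]
  rw [hfibers, integral_iUnion_fintype
    (fun b => (hX (measurableSet_singleton b)).inter (hS (measurableSet_singleton b)))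
    (fun b c hbc => ((pairwise_disjoint_fiber X hbc).mono Set.inter_subset_left
      Set.inter_subset_left)) (fun _ => hY.integrableOn)]
  exact Finset.sum_congr rfl fun b _ => setIntegral_preimage_inter_eq_mul_of_indepFun
    hindep hX hS hY.aestronglyMeasurable (measurableSet_singleton b) (measurableSet_singleton b)

theorem setIntegral_eq_mul_integral_of_indepFun [Fintype β] [MeasurableSingletonClass β]
    (hindep : IndepFun X (fun ω => (S ω, Y ω)) μ) (hX : Measurable X) (hS : Measurable S)
    (hY : Integrable Y μ) {c : ℝ} (hc : ∀ b, μ.real (X ⁻¹' {b}) = c) :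
    ∫ ω in {ω | X ω = S ω}, Y ω ∂μ = c * ∫ ω, Y ω ∂μ := by
  simp only [setIntegral_eq_sum_of_indepFun hindep hX hS hY, hc, ← Finset.mul_sum,
    sum_setIntegral_preimage_singleton hS hY]

theorem measureReal_preimage_singleton_eq_half [IsProbabilityMeasure μ] {X : Ω → Bool}
    (hX : Measurable X) (hbal : μ {ω | X ω = true} = 1 / 2) (b : Bool) :
    μ.real (X ⁻¹' {b}) = 1 / 2 := by
  have htrue : μ.real (X ⁻¹' {true}) = 1 / 2 := by
    simp [Measure.real, Set.preimage, hbal]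
  cases b
  · have hfalse : X ⁻¹' {false} = (X ⁻¹' {true})ᶜ := by
      ext ω
      simp
    rw [hfalse, measureReal_compl (hX (measurableSet_singleton _)), htrue, probReal_univ]
    norm_num
  · exact htrue

theorem integral_cond_eq_inv_mul_setIntegral (A : Set Ω) (f : Ω → ℝ) :
    ∫ ω, f ω ∂μ[|A] = (μ.real A)⁻¹ * ∫ ω in A, f ω ∂μ := by
  rw [cond, integral_smul_measure, ENNReal.toReal_inv, smul_eq_mul, Measure.real]

end ProbabilityTheory

theorem integral_cond_acceptance_eq {Ω : Type*} [MeasurableSpace Ω]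
    (μ : Measure Ω) [IsProbabilityMeasure μ]
    (Trct Tsynth : Ω → Bool) (Y : Ω → ℝ)
    (hTrct : Measurable Trct) (hTsynth : Measurable Tsynth)
    (hY : Integrable Y μ)
    (hindep : IndepFun Trct (fun ω => (Tsynth ω, Y ω)) μ)
    (hbal : μ {ω | Trct ω = true} = 1/2) :
    ∫ ω, Y ω ∂(ProbabilityTheory.cond μ {ω | Trct ω = Tsynth ω}) = ∫ ω, Y ω ∂μ := by
  have hunif := measureReal_preimage_singleton_eq_half hTrct hbal
  have hacc : μ.real {ω | Trct ω = Tsynth ω} = 1 / 2 := by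
    simpa using setIntegral_eq_mul_integral_of_indepFun (Y := fun _ => (1 : ℝ))
      (hindep.comp measurable_id (measurable_fst.prodMk measurable_const)) hTrct hTsynth
      (integrable_const 1) hunif
  rw [integral_cond_eq_inv_mul_setIntegral, hacc,
    setIntegral_eq_mul_integral_of_indepFun hindep hTrct hTsynth hY hunif]
  ring
end

section
/- Let (Ω, 𝓕, μ) be a probability space, T : Ω → Bool measurable, and Y0, Y1 : Ω → ℝ integrable. Suppose T is independent of the pair ω ↦ (Y0 ω, Y1 ω) under μ, and 0 < μ({ω | T ω = true}) < 1. Define the observed outcome Y ω = if T ω then Y1 ω else Y0 ω. Then the difference of arm means identifies the average treatment effect: ∫ Y d(ProbabilityTheory.cond μ {T = true}) − ∫ Y d(ProbabilityTheory.cond μ {T = false}) = ∫ (Y1 − Y0) dμ. -/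
/-!
Conditioning on an event `{T ∈ s}` does not change the law of a variable independent of `T`. On
each arm the observed outcome coincides with one potential outcome, so the treated-arm mean is
`𝔼[Y1]` and the control-arm mean is `𝔼[Y0]`.
-/

open MeasureTheory ProbabilityTheory

namespace ProbabilityTheory

variable {Ω α β E : Type*} {mΩ : MeasurableSpace Ω} {mα : MeasurableSpace α}
  {mβ : MeasurableSpace β} [NormedAddCommGroup E] [NormedSpace ℝ E]
  {μ : Measure Ω} [IsFiniteMeasure μ] {X : Ω → α} {Y : Ω → β}

theorem IndepFun.integral_comp_cond_preimage (hXY : IndepFun X Y μ) (hX : Measurable X)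
    (hY : AEMeasurable Y μ) {s : Set α} (hs : MeasurableSet s) (hμs : μ (X ⁻¹' s) ≠ 0)
    {f : β → E} (hf : AEStronglyMeasurable f (μ.map Y)) :
    ∫ ω, f (Y ω) ∂μ[|X ⁻¹' s] = ∫ ω, f (Y ω) ∂μ := by
  have hrestrict : ∫ ω in X ⁻¹' s, f (Y ω) ∂μ = μ.real (X ⁻¹' s) • ∫ ω, f (Y ω) ∂μ :=
    Indep.setIntegral_eq_smul hX.comap_le hXY hY ⟨s, hs, rfl⟩ hf
  rw [cond, integral_smul_measure, hrestrict, smul_smul, ENNReal.toReal_inv, measureReal_def,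
    inv_mul_cancel₀ (ENNReal.toReal_ne_zero.mpr ⟨hμs, measure_ne_top μ _⟩), one_smul]

end ProbabilityTheory

theorem rct_difference_in_means_identifies_ate {Ω : Type*} [MeasurableSpace Ω]
    (μ : Measure Ω) [IsProbabilityMeasure μ]
    (T : Ω → Bool) (Y0 Y1 : Ω → ℝ)
    (hT : Measurable T) (hY0 : Integrable Y0 μ) (hY1 : Integrable Y1 μ)
    (hindep : IndepFun T (fun ω => (Y0 ω, Y1 ω)) μ)
    (hpos : 0 < μ {ω | T ω = true}) (hlt : μ {ω | T ω = true} < 1) :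
    (∫ ω, (if T ω then Y1 ω else Y0 ω) ∂(ProbabilityTheory.cond μ {ω | T ω = true}))
      - (∫ ω, (if T ω then Y1 ω else Y0 ω) ∂(ProbabilityTheory.cond μ {ω | T ω = false}))
      = ∫ ω, (Y1 ω - Y0 ω) ∂μ := by
  have hY : AEMeasurable (fun ω => (Y0 ω, Y1 ω)) μ := hY0.aemeasurable.prodMk hY1.aemeasurable
  have htreated_meas : MeasurableSet {ω | T ω = true} := hT (measurableSet_singleton true)
  have hcontrol_meas : MeasurableSet {ω | T ω = false} := hT (measurableSet_singleton false)
  have hcontrol_pos : μ {ω | T ω = false} ≠ 0 := by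
    have hcompl : {ω | T ω = false} = {ω | T ω = true}ᶜ := by ext; simp
    rw [hcompl, prob_compl_eq_one_sub htreated_meas]
    exact (tsub_pos_of_lt hlt).ne'
  have htreated : ∫ ω, (if T ω then Y1 ω else Y0 ω) ∂μ[|{ω | T ω = true}] = ∫ ω, Y1 ω ∂μ := by
    rw [integral_congr_ae (ae_cond_of_forall_mem htreated_meas
      fun ω (hω : T ω = true) => if_pos hω)]
    exact hindep.integral_comp_cond_preimage hT hY (measurableSet_singleton true) hpos.ne'
      measurable_snd.aestronglyMeasurable
  have hcontrol : ∫ ω, (if T ω then Y1 ω else Y0 ω) ∂μ[|{ω | T ω = false}] = ∫ ω, Y0 ω ∂μ := by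
    rw [integral_congr_ae (ae_cond_of_forall_mem hcontrol_meas
      fun ω (hω : T ω = false) => if_neg (by simp [hω]))]
    exact hindep.integral_comp_cond_preimage hT hY (measurableSet_singleton false) hcontrol_pos
      measurable_fst.aestronglyMeasurable
  rw [htreated, hcontrol, integral_sub hY1 hY0]
end

section
/- (Causal effect preservation.) Let (Ω, 𝓕, μ) be a probability space, T_rct, T_synth : Ω → Bool measurable, and Y0, Y1 : Ω → ℝ integrable. Suppose T_rct is independent of the triple ω ↦ (T_synth ω, Y0 ω, Y1 ω) under μ and μ({ω | T_rct ω = true}) = 1/2. Define the observed outcome Y ω = if T_rct ω then Y1 ω else Y0 ω and the acceptance event A = {ω | T_rct ω = T_synth ω}. Then the population average treatment effect in the accepted population equals the RCT average treatment effect: ∫ (Y1 − Y0) d(ProbabilityTheory.cond μ A) = ∫ Y d(ProbabilityTheory.cond μ {T_rct = true}) − ∫ Y d(ProbabilityTheory.cond μ {T_rct = false}). -/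
/-!
Write `A = {T_rct = T_synth}`. Splitting `A` along the value `t` of `T_rct` and using that
`T_rct` is independent of `(T_synth, Z)` and uniform gives
`∫_A Z = ∑ₜ μ(T_rct = t) ∫_{T_synth = t} Z = ½ ∫ Z`; with `Z = 1` this is `μ A = ½`, so
conditioning on `A` does not change the mean of `Y1 - Y0`. On `{T_rct = t}` the observed
outcome is `Y_t`, and conditioning on an event of `T_rct` does not change the mean of the
independent `Y_t`, so the right-hand side is `E[Y1] - E[Y0]` as well.
-/

open MeasureTheory ProbabilityTheory

namespace ProbabilityTheory

variable {Ω β : Type*} [MeasurableSpace Ω] {μ : Measure Ω}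

lemma integral_cond (f : Ω → ℝ) (s : Set Ω) :
    ∫ ω, f ω ∂μ[|s] = (μ.real s)⁻¹ * ∫ ω in s, f ω ∂μ := by
  rw [cond, integral_smul_measure, smul_eq_mul, ENNReal.toReal_inv, measureReal_def]

variable [MeasurableSpace β] {T : Ω → β} {Z : Ω → ℝ}

lemma IndepFun.setIntegral_preimage (hindep : IndepFun T Z μ) (hT : Measurable T)
    {s : Set β} (hs : MeasurableSet s) (hZ : AEStronglyMeasurable Z μ) :
    ∫ ω in T ⁻¹' s, Z ω ∂μ = μ.real (T ⁻¹' s) * ∫ ω, Z ω ∂μ := by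
  have hφ : Measurable (s.indicator (1 : β → ℝ)) := measurable_one.indicator hs
  have hind : IndepFun (s.indicator 1 ∘ T) Z μ := hindep.comp (ψ := id) hφ measurable_id
  calc ∫ ω in T ⁻¹' s, Z ω ∂μ = ∫ ω, (s.indicator 1 ∘ T) ω * Z ω ∂μ := by
        rw [← integral_indicator (hT hs)]
        congr with ω
        by_cases h : T ω ∈ s <;> simp [h]
    _ = μ.real (T ⁻¹' s) * ∫ ω, Z ω ∂μ := by
        rw [hind.integral_fun_mul_eq_mul_integral (hφ.comp hT).aestronglyMeasurable hZ,
          ← integral_indicator_one (hT hs)]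
        rfl

lemma IndepFun.integral_cond_preimage [IsFiniteMeasure μ] (hindep : IndepFun T Z μ)
    (hT : Measurable T) {s : Set β} (hs : MeasurableSet s) (hZ : AEStronglyMeasurable Z μ)
    (hpos : μ (T ⁻¹' s) ≠ 0) :
    ∫ ω, Z ω ∂μ[|T ⁻¹' s] = ∫ ω, Z ω ∂μ := by
  rw [integral_cond, hindep.setIntegral_preimage hT hs hZ, inv_mul_cancel_left₀]
  exact (measureReal_ne_zero_iff (measure_ne_top _ _)).2 hpos

variable [Fintype β] [MeasurableSingletonClass β] {S : Ω → β}

lemma IndepFun.setIntegral_setOf_eq_of_uniform (hindep : IndepFun T (fun ω => (S ω, Z ω)) μ)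
    (hT : Measurable T) (hS : Measurable S) (hZ : Integrable Z μ) {p : ℝ}
    (hp : ∀ t, μ.real (T ⁻¹' {t}) = p) :
    ∫ ω in {ω | T ω = S ω}, Z ω ∂μ = p * ∫ ω, Z ω ∂μ := by
  have hZS (t : β) : Integrable ((S ⁻¹' {t}).indicator Z) μ :=
    hZ.indicator (hS (measurableSet_singleton t))
  have hindep_t (t : β) : IndepFun T ((S ⁻¹' {t}).indicator Z) μ :=
    hindep.comp (ψ := (Prod.fst ⁻¹' {t}).indicator Prod.snd) measurable_id
      (measurable_snd.indicator (measurable_fst (measurableSet_singleton t)))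
  calc ∫ ω in {ω | T ω = S ω}, Z ω ∂μ
        = ∫ ω, ∑ t, (T ⁻¹' {t}).indicator ((S ⁻¹' {t}).indicator Z) ω ∂μ := by
          rw [← integral_indicator (measurableSet_eq_fun hT hS)]
          congr with ω
          rw [Finset.sum_eq_single (T ω) (fun t _ ht => by simp [Ne.symm ht]) (by simp)]
          by_cases h : T ω = S ω <;> simp [h, eq_comm]
    _ = ∑ t, p * ∫ ω, (S ⁻¹' {t}).indicator Z ω ∂μ := by
          rw [integral_finsetSum _ (fun t _ => (hZS t).indicator (hT (measurableSet_singleton t)))]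
          refine Finset.sum_congr rfl fun t _ => ?_
          rw [integral_indicator (hT (measurableSet_singleton t)), ← hp t,
            (hindep_t t).setIntegral_preimage hT (measurableSet_singleton t)
              (hZS t).aestronglyMeasurable]
    _ = p * ∫ ω, Z ω ∂μ := by
          rw [← Finset.mul_sum, ← integral_finsetSum _ (fun t _ => hZS t)]
          congr with ω
          rw [Finset.sum_eq_single (S ω) (fun t _ ht => by simp [Ne.symm ht]) (by simp)]
          simp

lemma IndepFun.integral_cond_setOf_eq_of_uniform [IsProbabilityMeasure μ]
    (hindep : IndepFun T (fun ω => (S ω, Z ω)) μ) (hT : Measurable T) (hS : Measurable S)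
    (hZ : Integrable Z μ) {p : ℝ} (hp : ∀ t, μ.real (T ⁻¹' {t}) = p) (hp₀ : p ≠ 0) :
    ∫ ω, Z ω ∂μ[|{ω | T ω = S ω}] = ∫ ω, Z ω ∂μ := by
  have hone : IndepFun T (fun ω => (S ω, (1 : ℝ))) μ :=
    hindep.comp measurable_id (by fun_prop : Measurable fun q : β × ℝ => (q.1, (1 : ℝ)))
  have hA : μ.real {ω | T ω = S ω} = p := by
    have := hone.setIntegral_setOf_eq_of_uniform hT hS (integrable_const 1) hp
    rwa [setIntegral_const, integral_const, smul_eq_mul, mul_one, smul_eq_mul, mul_one,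
      probReal_univ, mul_one] at this
  rw [integral_cond, hA, hindep.setIntegral_setOf_eq_of_uniform hT hS hZ hp,
    inv_mul_cancel_left₀ hp₀]

lemma measureReal_preimage_eq_half_of_balanced [IsProbabilityMeasure μ] {T : Ω → Bool}
    (hT : Measurable T) (hbal : μ {ω | T ω = true} = 1 / 2) (t : Bool) :
    μ.real (T ⁻¹' {t}) = 1 / 2 := by
  have htrue : μ.real (T ⁻¹' {true}) = 1 / 2 := by
    simp [measureReal_def, Set.preimage, hbal]
  cases t
  · have hcompl : T ⁻¹' {false} = (T ⁻¹' {true})ᶜ := by ext; simp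
    rw [hcompl, probReal_compl_eq_one_sub (hT (measurableSet_singleton true)), htrue]
    norm_num
  · exact htrue

end ProbabilityTheory

theorem causal_effect_preservation {Ω : Type*} [MeasurableSpace Ω]
    (μ : Measure Ω) [IsProbabilityMeasure μ]
    (Trct Tsynth : Ω → Bool) (Y0 Y1 : Ω → ℝ)
    (hTrct : Measurable Trct) (hTsynth : Measurable Tsynth)
    (hY0 : Integrable Y0 μ) (hY1 : Integrable Y1 μ)
    (hindep : IndepFun Trct (fun ω => (Tsynth ω, Y0 ω, Y1 ω)) μ)
    (hbal : μ {ω | Trct ω = true} = 1/2) :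
    ∫ ω, (Y1 ω - Y0 ω) ∂(ProbabilityTheory.cond μ {ω | Trct ω = Tsynth ω})
      = (∫ ω, (if Trct ω then Y1 ω else Y0 ω)
            ∂(ProbabilityTheory.cond μ {ω | Trct ω = true}))
        - (∫ ω, (if Trct ω then Y1 ω else Y0 ω)
            ∂(ProbabilityTheory.cond μ {ω | Trct ω = false})) := by
  have hhalf := measureReal_preimage_eq_half_of_balanced hTrct hbal
  have hindep_effect : IndepFun Trct (fun ω => (Tsynth ω, Y1 ω - Y0 ω)) μ :=
    hindep.comp measurable_id
      (by fun_prop : Measurable fun q : Bool × ℝ × ℝ => (q.1, q.2.2 - q.2.1))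
  have hindep_Y1 : IndepFun Trct Y1 μ :=
    hindep.comp measurable_id (by fun_prop : Measurable fun q : Bool × ℝ × ℝ => q.2.2)
  have hindep_Y0 : IndepFun Trct Y0 μ :=
    hindep.comp measurable_id (by fun_prop : Measurable fun q : Bool × ℝ × ℝ => q.2.1)
  have hobserved (t : Bool) (Z : Ω → ℝ) (hZ : Integrable Z μ) (hindepZ : IndepFun Trct Z μ)
      (hYZ : ∀ ω, Trct ω = t → (if Trct ω then Y1 ω else Y0 ω) = Z ω) :
      ∫ ω, (if Trct ω then Y1 ω else Y0 ω) ∂μ[|{ω | Trct ω = t}] = ∫ ω, Z ω ∂μ := by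
    have hs : MeasurableSet {ω | Trct ω = t} := hTrct (measurableSet_singleton t)
    rw [integral_congr_ae ((ae_cond_mem hs).mono hYZ)]
    refine hindepZ.integral_cond_preimage hTrct (measurableSet_singleton t)
      hZ.aestronglyMeasurable ?_
    rw [← measureReal_ne_zero_iff (measure_ne_top _ _), hhalf]
    norm_num
  rw [hindep_effect.integral_cond_setOf_eq_of_uniform hTrct hTsynth (hY1.sub hY0) hhalf
      (by norm_num),
    integral_sub hY1 hY0, hobserved true Y1 hY1 hindep_Y1 (fun ω h => by simp [h]),
    hobserved false Y0 hY0 hindep_Y0 (fun ω h => by simp [h])]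
end

section
/- (Instrument relevance preservation.) Let (Ω, 𝓕, μ) be a probability space, T_rct, T_synth, Z : Ω → Bool measurable. Suppose T_rct is independent of the pair ω ↦ (T_synth ω, Z ω) under μ and μ({ω | T_rct ω = true}) = 1/2. Let A = {ω | T_rct ω = T_synth ω}, and write z ω = if Z ω then (1:ℝ) else 0 and t ω = if T_synth ω then (1:ℝ) else 0. Then the covariance of Z and T_synth is preserved under conditioning on acceptance: ∫ z·t d(ProbabilityTheory.cond μ A) − (∫ z d(ProbabilityTheory.cond μ A)) · (∫ t d(ProbabilityTheory.cond μ A)) = ∫ z·t dμ − (∫ z dμ)(∫ t dμ). In particular, if the covariance of Z and T_synth under μ is nonzero, it is nonzero under ProbabilityTheory.cond μ A. -/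
/-!
A draw is accepted when a fair coin `X`, independent of `W = (T_synth, Z)`, equals `T_synth`.
Whatever the value of `W`, this happens with probability `1/2`, so acceptance carries no
information about `W`: conditioning on it leaves the law of `W`, and hence every moment of
`(T_synth, Z)`, unchanged.
-/

open MeasureTheory ProbabilityTheory
open scoped ENNReal

namespace ProbabilityTheory

variable {Ω α β : Type*} [MeasurableSpace Ω] [MeasurableSpace α] [MeasurableEq α]
  [MeasurableSpace β] {μ : Measure Ω} {X : Ω → α} {W : Ω → β} {f : β → α} {c : ℝ≥0∞}

theorem IndepFun.measure_eq_comp_inter_preimage [IsFiniteMeasure μ] (hind : IndepFun X W μ)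
    (hX : Measurable X) (hW : Measurable W) (hf : Measurable f)
    (hunif : ∀ a, μ (X ⁻¹' {a}) = c) {S : Set β} (hS : MeasurableSet S) :
    μ ({ω | X ω = f (W ω)} ∩ W ⁻¹' S) = c * μ (W ⁻¹' S) := by
  set E : Set (α × β) := {p | p.1 = f p.2} ∩ Prod.snd ⁻¹' S
  have hE : MeasurableSet E :=
    (measurableSet_eq_fun measurable_fst (hf.comp measurable_snd)).inter (measurable_snd hS)
  have hslice (w : β) : μ.map X ((fun a => (a, w)) ⁻¹' E) = S.indicator (fun _ => c) w := by
    by_cases hw : w ∈ S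
    · have : (fun a => (a, w)) ⁻¹' E = {f w} := by ext a; simp [E, hw]
      rw [this, Measure.map_apply hX (measurableSet_singleton _), hunif, Set.indicator_of_mem hw]
    · have : (fun a => (a, w)) ⁻¹' E = ∅ := by ext a; simp [E, hw]
      rw [this, measure_empty, Set.indicator_of_notMem hw]
  calc μ ({ω | X ω = f (W ω)} ∩ W ⁻¹' S)
      = μ.map (fun ω => (X ω, W ω)) E := (Measure.map_apply (hX.prodMk hW) hE).symm
    _ = (μ.map X).prod (μ.map W) E := by
      rw [(indepFun_iff_map_prod_eq_prod_map_map hX.aemeasurable hW.aemeasurable).1 hind]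
    _ = c * μ (W ⁻¹' S) := by
      simp_rw [Measure.prod_apply_symm hE, hslice, lintegral_indicator_const hS,
        Measure.map_apply hW hS]

theorem IndepFun.identDistrib_cond_eq_comp [IsProbabilityMeasure μ] (hind : IndepFun X W μ)
    (hX : Measurable X) (hW : Measurable W) (hf : Measurable f)
    (hunif : ∀ a, μ (X ⁻¹' {a}) = c) (hc : c ≠ 0) :
    IdentDistrib W W (cond μ {ω | X ω = f (W ω)}) μ := by
  have hA : MeasurableSet {ω | X ω = f (W ω)} := measurableSet_eq_fun hX (hf.comp hW)
  have hμA : μ {ω | X ω = f (W ω)} = c := by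
    simpa using hind.measure_eq_comp_inter_preimage hX hW hf hunif MeasurableSet.univ
  have hc_top : c ≠ ∞ := hμA ▸ measure_ne_top μ _
  refine ⟨hW.aemeasurable, hW.aemeasurable, ?_⟩
  ext S hS
  rw [Measure.map_apply hW hS, Measure.map_apply hW hS, cond_apply hA, hμA,
    hind.measure_eq_comp_inter_preimage hX hW hf hunif hS, ← mul_assoc,
    ENNReal.inv_mul_cancel hc hc_top, one_mul]

theorem measure_preimage_singleton_eq_half_of_bool [IsProbabilityMeasure μ] {B : Ω → Bool}
    (hB : Measurable B) (h : μ {ω | B ω = true} = 1 / 2) (b : Bool) :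
    μ (B ⁻¹' {b}) = 1 / 2 := by
  cases b
  · have hcompl : B ⁻¹' {false} = {ω | B ω = true}ᶜ := by ext ω; simp
    rw [hcompl, prob_compl_eq_one_sub (s := {ω | B ω = true}) (hB (measurableSet_singleton _)),
      h, ENNReal.sub_half ENNReal.one_ne_top]
  · exact h

end ProbabilityTheory

theorem instrument_relevance_preservation {Ω : Type*} [MeasurableSpace Ω]
    (μ : Measure Ω) [IsProbabilityMeasure μ]
    (Trct Tsynth Z : Ω → Bool)
    (hTrct : Measurable Trct) (hTsynth : Measurable Tsynth) (hZ : Measurable Z)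
    (hindep : IndepFun Trct (fun ω => (Tsynth ω, Z ω)) μ)
    (hbal : μ {ω | Trct ω = true} = 1/2) :
    ((∫ ω, (if Z ω then (1:ℝ) else 0) * (if Tsynth ω then (1:ℝ) else 0)
        ∂(ProbabilityTheory.cond μ {ω | Trct ω = Tsynth ω}))
      - (∫ ω, (if Z ω then (1:ℝ) else 0)
          ∂(ProbabilityTheory.cond μ {ω | Trct ω = Tsynth ω}))
        * (∫ ω, (if Tsynth ω then (1:ℝ) else 0)
          ∂(ProbabilityTheory.cond μ {ω | Trct ω = Tsynth ω}))
      = (∫ ω, (if Z ω then (1:ℝ) else 0) * (if Tsynth ω then (1:ℝ) else 0) ∂μ)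
        - (∫ ω, (if Z ω then (1:ℝ) else 0) ∂μ)
          * (∫ ω, (if Tsynth ω then (1:ℝ) else 0) ∂μ))
    ∧ ((∫ ω, (if Z ω then (1:ℝ) else 0) * (if Tsynth ω then (1:ℝ) else 0) ∂μ)
        - (∫ ω, (if Z ω then (1:ℝ) else 0) ∂μ)
          * (∫ ω, (if Tsynth ω then (1:ℝ) else 0) ∂μ) ≠ 0 →
      (∫ ω, (if Z ω then (1:ℝ) else 0) * (if Tsynth ω then (1:ℝ) else 0)
          ∂(ProbabilityTheory.cond μ {ω | Trct ω = Tsynth ω}))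
        - (∫ ω, (if Z ω then (1:ℝ) else 0)
            ∂(ProbabilityTheory.cond μ {ω | Trct ω = Tsynth ω}))
          * (∫ ω, (if Tsynth ω then (1:ℝ) else 0)
            ∂(ProbabilityTheory.cond μ {ω | Trct ω = Tsynth ω})) ≠ 0) := by
  set W : Ω → Bool × Bool := fun ω => (Tsynth ω, Z ω)
  have hlaw : IdentDistrib W W (cond μ {ω | Trct ω = Tsynth ω}) μ :=
    hindep.identDistrib_cond_eq_comp hTrct (hTsynth.prodMk hZ) measurable_fst
      (measure_preimage_singleton_eq_half_of_bool hTrct hbal) (by norm_num)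
  have hmoment (g : Bool × Bool → ℝ) :
      ∫ ω, g (W ω) ∂(cond μ {ω | Trct ω = Tsynth ω}) = ∫ ω, g (W ω) ∂μ :=
    (hlaw.comp (measurable_of_countable g)).integral_eq
  have hZT := hmoment fun p => (if p.2 then (1:ℝ) else 0) * (if p.1 then (1:ℝ) else 0)
  have hZ1 := hmoment fun p => if p.2 then (1:ℝ) else 0
  have hT1 := hmoment fun p => if p.1 then (1:ℝ) else 0
  simp only [W] at hZT hZ1 hT1
  rw [hZT, hZ1, hT1]
  exact ⟨rfl, id⟩
end

section
/- (Instrument unconfoundedness from the sampling construction.) Let Ω be a standard Borel space with a probability measure μ, let E1, E2, E3, E4 be standard Borel spaces, O : Ω → E1, U : Ω → E2, ξ : Ω → E3 measurable, and f : E1 × E3 → E4 measurable. Suppose ξ is independent of the pair ω ↦ (O ω, U ω) under μ, and define Z ω = f (O ω) (ξ ω). Then Z and U are conditionally independent given the σ-algebra generated by O (ProbabilityTheory.CondIndepFun with conditioning σ-algebra σ(O)). -/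
/-!
Because `ξ` is independent of `(O, U)`, conditioning the event `{(O, ξ) ∈ s}` on `σ(O, U)`
freezes `O` and integrates `ξ` against its law. The result is a function of `O` alone, so it is
also the conditional probability given `σ(O)`. An event whose conditional probabilities given
`σ(O)` and the finer `σ(O, U)` agree is conditionally independent of `σ(O, U)` given `σ(O)`.
Hence `(O, ξ)`, and with it `f (O, ξ)`, is conditionally independent of `U` given `σ(O)`.
-/

open MeasureTheory ProbabilityTheory Filter

namespace ProbabilityTheory

variable {Ω β γ : Type*} {mΩ : MeasurableSpace Ω} {mβ : MeasurableSpace β}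
  {mγ : MeasurableSpace γ} {μ : Measure Ω} [IsFiniteMeasure μ]

lemma condExp_inter_eq_mul_of_condExp_eq {m₁ m₂ : MeasurableSpace Ω} (hm₁₂ : m₁ ≤ m₂)
    (hm₂ : m₂ ≤ mΩ) {A B : Set Ω} (hA : MeasurableSet[mΩ] A) (hB : MeasurableSet[m₂] B)
    (h : μ⟦A | m₂⟧ =ᵐ[μ] μ⟦A | m₁⟧) :
    μ⟦A ∩ B | m₁⟧ =ᵐ[μ] μ⟦A | m₁⟧ * μ⟦B | m₁⟧ := by
  have h1B : StronglyMeasurable[m₂] (B.indicator (1 : Ω → ℝ)) :=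
    stronglyMeasurable_const.indicator hB
  have h1B_bound : ∀ᵐ ω ∂μ, ‖B.indicator (1 : Ω → ℝ) ω‖ ≤ 1 :=
    ae_of_all _ fun ω => norm_indicator_le_norm_self _ ω |>.trans (by simp)
  have h1B_int : Integrable (B.indicator (1 : Ω → ℝ)) μ :=
    (integrable_const 1).indicator (hm₂ _ hB)
  calc μ⟦A ∩ B | m₁⟧
      =ᵐ[μ] μ[μ⟦B ∩ A | m₂⟧ | m₁] := by
        rw [Set.inter_comm]; exact (condExp_condExp_of_le hm₁₂ hm₂).symm
    _ =ᵐ[μ] μ[B.indicator 1 * μ⟦A | m₂⟧ | m₁] := by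
        refine condExp_congr_ae ?_
        rw [← Pi.one_def, Set.inter_indicator_one]
        exact condExp_stronglyMeasurable_mul_of_bound hm₂ h1B
          ((integrable_const 1).indicator hA) 1 h1B_bound
    _ =ᵐ[μ] μ[B.indicator 1 * μ⟦A | m₁⟧ | m₁] :=
        condExp_congr_ae (EventuallyEq.rfl.mul h)
    _ =ᵐ[μ] μ⟦B | m₁⟧ * μ⟦A | m₁⟧ :=
        condExp_mul_of_stronglyMeasurable_right stronglyMeasurable_condExp
          (integrable_condExp.bdd_mul (h1B.mono hm₂).aestronglyMeasurable h1B_bound) h1B_int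
    _ = μ⟦A | m₁⟧ * μ⟦B | m₁⟧ := mul_comm _ _

lemma condIndep_of_forall_condExp_eq [StandardBorelSpace Ω] {m m₁ m₂ : MeasurableSpace Ω}
    (hm : m ≤ mΩ) (hm₁₂ : m₁ ≤ m₂) (hm₂ : m₂ ≤ mΩ)
    (h : ∀ s, MeasurableSet[m] s → μ⟦s | m₂⟧ =ᵐ[μ] μ⟦s | m₁⟧) :
    CondIndep m₁ m m₂ (hm₁₂.trans hm₂) μ :=
  (condIndep_iff _ _ _ _ hm hm₂ μ).2 fun _ _ hs ht =>
    condExp_inter_eq_mul_of_condExp_eq hm₁₂ hm₂ (hm _ hs) ht (h _ hs)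

lemma IndepFun.measure_preimage_prodMk_inter_preimage {Y : Ω → β} {X : Ω → γ}
    (hY : Measurable Y) (hX : Measurable X) (hYX : IndepFun Y X μ) {s : Set (β × γ)}
    (hs : MeasurableSet s) {t : Set β} (ht : MeasurableSet t) :
    μ ((fun ω => (Y ω, X ω)) ⁻¹' s ∩ Y ⁻¹' t)
      = ∫⁻ ω in Y ⁻¹' t, μ.map X (Prod.mk (Y ω) ⁻¹' s) ∂μ := by
  have hYX_law : μ.map (fun ω => (Y ω, X ω)) = (μ.map Y).prod (μ.map X) :=
    (indepFun_iff_map_prod_eq_prod_map_map hY.aemeasurable hX.aemeasurable).mp hYX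
  calc μ ((fun ω => (Y ω, X ω)) ⁻¹' s ∩ Y ⁻¹' t)
      = μ.map (fun ω => (Y ω, X ω)) (s ∩ t ×ˢ Set.univ) := by
        rw [Measure.map_apply (hY.prodMk hX) (hs.inter (ht.prod .univ))]
        congr 1
        ext ω
        simp
    _ = ((μ.map Y).restrict t).prod (μ.map X) s := by
        rw [hYX_law, ← Measure.restrict_apply hs, ← Measure.prod_restrict,
          Measure.restrict_univ]
    _ = ∫⁻ ω in Y ⁻¹' t, μ.map X (Prod.mk (Y ω) ⁻¹' s) ∂μ := by
        rw [Measure.prod_apply hs, Measure.restrict_map hY ht,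
          lintegral_map (measurable_measure_prodMk_left hs) hY]

/-- The freezing lemma: given `Y`, the value `Y ω` is frozen and `X` keeps its law. -/
lemma IndepFun.condExp_preimage_prodMk {Y : Ω → β} {X : Ω → γ}
    (hY : Measurable Y) (hX : Measurable X) (hYX : IndepFun Y X μ) {s : Set (β × γ)}
    (hs : MeasurableSet s) :
    μ⟦(fun ω => (Y ω, X ω)) ⁻¹' s | mβ.comap Y⟧
      =ᵐ[μ] fun ω => (μ.map X).real (Prod.mk (Y ω) ⁻¹' s) := by
  have hF : Measurable[mβ.comap Y] fun ω => μ.map X (Prod.mk (Y ω) ⁻¹' s) :=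
    (measurable_measure_prodMk_left hs).comp (comap_measurable Y)
  have hF_int : Integrable (fun ω => (μ.map X).real (Prod.mk (Y ω) ⁻¹' s)) μ :=
    .of_bound (hF.ennreal_toReal.mono hY.comap_le le_rfl).aestronglyMeasurable
      ((μ.map X).real Set.univ) (ae_of_all _ fun ω => by
        rw [Real.norm_of_nonneg measureReal_nonneg]
        exact measureReal_mono (Set.subset_univ _))
  refine (ae_eq_condExp_of_forall_setIntegral_eq hY.comap_le
    ((integrable_const 1).indicator ((hY.prodMk hX) hs)) (fun _ _ _ => hF_int.integrableOn)
    ?_ hF.ennreal_toReal.aestronglyMeasurable).symm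
  rintro _ ⟨t, ht, rfl⟩ -
  rw [setIntegral_indicator ((hY.prodMk hX) hs), setIntegral_const, smul_eq_mul, mul_one,
    Measure.real, Set.inter_comm, hYX.measure_preimage_prodMk_inter_preimage hY hX hs ht,
    ← integral_toReal]
  · rfl
  · exact (hF.mono hY.comap_le le_rfl).aemeasurable
  · exact ae_of_all _ fun ω => measure_lt_top _ _

end ProbabilityTheory

theorem instrument_unconfoundedness_general {Ω E1 E2 E3 E4 : Type*}
    [MeasurableSpace Ω] [StandardBorelSpace Ω]
    [MeasurableSpace E1]
    [MeasurableSpace E2]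
    [MeasurableSpace E3]
    [MeasurableSpace E4]
    (μ : Measure Ω) [IsProbabilityMeasure μ]
    (O : Ω → E1) (U : Ω → E2) (ξ : Ω → E3) (f : E1 × E3 → E4)
    (hO : Measurable O) (hU : Measurable U) (hξ : Measurable ξ) (hf : Measurable f)
    (hindep : IndepFun ξ (fun ω => (O ω, U ω)) μ) :
    CondIndepFun (MeasurableSpace.comap O inferInstance)
      (measurable_iff_comap_le.mp hO) (fun ω => f (O ω, ξ ω)) U μ := by
  have hOU : Measurable fun ω => (O ω, U ω) := hO.prodMk hU
  have hO_le : MeasurableSpace.comap O inferInstance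
      ≤ MeasurableSpace.comap (fun ω => (O ω, U ω)) inferInstance :=
    (comap_measurable fun ω => (O ω, U ω)).fst.comap_le
  have hU_le : MeasurableSpace.comap U inferInstance
      ≤ MeasurableSpace.comap (fun ω => (O ω, U ω)) inferInstance :=
    (comap_measurable fun ω => (O ω, U ω)).snd.comap_le
  have hcondExp : ∀ s,
      MeasurableSet[MeasurableSpace.comap (fun ω => (O ω, ξ ω)) inferInstance] s →
      μ⟦s | MeasurableSpace.comap (fun ω => (O ω, U ω)) inferInstance⟧
        =ᵐ[μ] μ⟦s | MeasurableSpace.comap O inferInstance⟧ := by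
    rintro _ ⟨s, hs, rfl⟩
    -- `{(O, ξ) ∈ s}` is `{((O, U), ξ) ∈ s'}` for the preimage `s'` of `s` under `fst × id`
    exact (hindep.symm.condExp_preimage_prodMk hOU hξ
      (measurable_fst.prodMap measurable_id hs)).trans
      ((hindep.symm.comp measurable_fst measurable_id).condExp_preimage_prodMk hO hξ hs).symm
  have hcondIndep :=
    condIndep_of_forall_condExp_eq (hO.prodMk hξ).comap_le hO_le hOU.comap_le hcondExp
  have hpair : CondIndepFun _ _ (fun ω => (O ω, ξ ω)) U μ :=
    (condIndepFun_iff_condIndep _ _ _ _ μ).2 (condIndep_of_condIndep_of_le_right hcondIndep hU_le)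
  exact hpair.comp hf measurable_id

theorem instrument_unconfoundedness {Ω E1 E2 E3 E4 : Type*}
    [MeasurableSpace Ω] [StandardBorelSpace Ω]
    [MeasurableSpace E1] [StandardBorelSpace E1]
    [MeasurableSpace E2] [StandardBorelSpace E2]
    [MeasurableSpace E3] [StandardBorelSpace E3]
    [MeasurableSpace E4] [StandardBorelSpace E4]
    (μ : Measure Ω) [IsProbabilityMeasure μ]
    (O : Ω → E1) (U : Ω → E2) (ξ : Ω → E3) (f : E1 × E3 → E4)
    (hO : Measurable O) (hU : Measurable U) (hξ : Measurable ξ) (hf : Measurable f)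
    (hindep : IndepFun ξ (fun ω => (O ω, U ω)) μ) :
    CondIndepFun (MeasurableSpace.comap O inferInstance)
      (measurable_iff_comap_le.mp hO) (fun ω => f (O ω, ξ ω)) U μ :=
  instrument_unconfoundedness_general μ O U ξ f hO hU hξ hf hindep
end

section
/- (Conditional expectation preservation under independent conditioning.) Let (Ω, 𝓕, μ) be a probability space, 𝓖 ⊆ 𝓕 a sub-σ-algebra, A ∈ 𝓕 with μ(A) > 0, and suppose the event A is independent of 𝓖 (for every G ∈ 𝓖, μ(A ∩ G) = μ(A) · μ(G)). Let m ⊆ 𝓖 be a sub-σ-algebra and let Y : Ω → ℝ be integrable and 𝓖-measurable. Then the conditional expectations agree: the conditional expectation of Y given m under ProbabilityTheory.cond μ A equals the conditional expectation of Y given m under μ, μ-almost everywhere. -/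
open MeasureTheory ProbabilityTheory

theorem condexp_preserved_under_indep_conditioning {Ω : Type*} (𝓖 : MeasurableSpace Ω) (m : MeasurableSpace Ω) {𝓕 : MeasurableSpace Ω}
    (μ : Measure Ω) [IsProbabilityMeasure μ]
    (h𝓖 : 𝓖 ≤ 𝓕)
    (A : Set Ω) (hA : MeasurableSet A) (hApos : 0 < μ A)
    (hAindep : ∀ G : Set Ω, MeasurableSet[𝓖] G → μ (A ∩ G) = μ A * μ G)
    (hm : m ≤ 𝓖)
    (Y : Ω → ℝ) (hYint : Integrable Y μ) (hYmeas : Measurable[𝓖] Y) :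
    (ProbabilityTheory.cond μ A)[Y | m] =ᵐ[μ] μ[Y | m] := by
  have hA0 : μ A ≠ 0 := hApos.ne'
  have hν_eq : ∀ G : Set Ω, MeasurableSet[𝓖] G → ProbabilityTheory.cond μ A G = μ G := by
    intro G hG
    rw [ProbabilityTheory.cond_apply hA, hAindep G hG, ← mul_assoc,
      ENNReal.inv_mul_cancel hA0 (measure_ne_top μ A), one_mul]
  set ν := ProbabilityTheory.cond μ A with hν
  have hνprob : IsProbabilityMeasure ν := cond_isProbabilityMeasure hA0
  have htrim : ν.trim h𝓖 = μ.trim h𝓖 := by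
    refine @Measure.ext _ 𝓖 _ _ fun s hs => ?_
    rw [trim_measurableSet_eq h𝓖 hs, trim_measurableSet_eq h𝓖 hs, hν_eq s hs]
  have hint_eq : ∀ f : Ω → ℝ, StronglyMeasurable[𝓖] f → ∫ x, f x ∂ν = ∫ x, f x ∂μ := by
    intro f hf
    rw [integral_trim (μ := ν) h𝓖 hf, integral_trim (μ := μ) h𝓖 hf, htrim]
  have hintble : ∀ f : Ω → ℝ, StronglyMeasurable[𝓖] f → Integrable f μ → Integrable f ν := by
    intro f hf hfi
    have h1 := hfi.trim h𝓖 hf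
    rw [← htrim] at h1
    exact integrable_of_integrable_trim h𝓖 h1
  have hYsm : StronglyMeasurable[𝓖] Y := hYmeas.stronglyMeasurable
  have hYν : Integrable Y ν := hintble Y hYsm hYint
  have hg_sm : StronglyMeasurable[m] (μ[Y|m]) := stronglyMeasurable_condExp
  have hg_sm𝓖 : StronglyMeasurable[𝓖] (μ[Y|m]) := hg_sm.mono hm
  have hgμ : Integrable (μ[Y|m]) μ := integrable_condExp
  have hgν : Integrable (μ[Y|m]) ν := hintble _ hg_sm𝓖 hgμ
  have hset_eq : ∀ s : Set Ω, MeasurableSet[m] s →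
      ∫ x in s, (μ[Y|m]) x ∂ν = ∫ x in s, Y x ∂ν := by
    intro s hs
    have hs𝓖 : MeasurableSet[𝓖] s := hm s hs
    have hs𝓕 : MeasurableSet[𝓕] s := h𝓖 s hs𝓖
    have hres : ∀ f : Ω → ℝ, StronglyMeasurable[𝓖] f →
        ∫ x in s, f x ∂ν = ∫ x in s, f x ∂μ := by
      intro f hf
      rw [integral_trim (μ := ν.restrict s) h𝓖 hf,
        integral_trim (μ := μ.restrict s) h𝓖 hf,
        ← restrict_trim h𝓖 ν hs𝓖, ← restrict_trim h𝓖 μ hs𝓖, htrim]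
    rw [hres _ hg_sm𝓖, hres _ hYsm]
    exact setIntegral_condExp (hm.trans h𝓖) hYint hs
  have hae : (μ[Y|m]) =ᵐ[ν] ν[Y|m] := by
    refine ae_eq_condExp_of_forall_setIntegral_eq (hm.trans h𝓖) hYν
      (fun s _ _ => ?_) (fun s hs _ => hset_eq s hs)
      hg_sm.aestronglyMeasurable
    exact hgν.integrableOn
  have hνm_sm : StronglyMeasurable[m] (ν[Y|m]) := stronglyMeasurable_condExp
  have hEq : MeasurableSet[m] {x | (ν[Y|m]) x = (μ[Y|m]) x} :=
    measurableSet_eq_fun hνm_sm.measurable hg_sm.measurable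
  have hν0 : ν {x | ¬ (ν[Y|m]) x = (μ[Y|m]) x} = 0 := by
    have h2 := hae.symm
    rw [Filter.EventuallyEq, ae_iff] at h2
    exact h2
  rw [Filter.EventuallyEq, ae_iff]
  have hμν : μ {x | ¬ (ν[Y|m]) x = (μ[Y|m]) x} = ν {x | ¬ (ν[Y|m]) x = (μ[Y|m]) x} :=
    (hν_eq _ (hm _ hEq.compl)).symm
  rw [hμν]
  exact hν0
end

section
/- (Overlap preservation.) Let (Ω, 𝓕, μ) be a probability space, T_rct, T_synth : Ω → Bool measurable, with T_rct independent of T_synth under μ and μ({ω | T_rct ω = true}) = 1/2. Let A = {ω | T_rct ω = T_synth ω} and let ε > 0 satisfy ε ≤ μ({ω | T_synth ω = true}) ≤ 1 − ε. Then the accepted population retains overlap: ε ≤ (ProbabilityTheory.cond μ A) ({ω | T_synth ω = true}) ≤ 1 − ε. -/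
open MeasureTheory ProbabilityTheory
open scoped ENNReal

/-! Since `T_rct` is a fair coin independent of `T_synth`, the acceptance event `{T_rct = T_synth}`
has probability `p / 2 + (1 - p) / 2 = 1 / 2` and meets `{T_synth = true}` with probability `p / 2`,
where `p = μ {T_synth = true}`. Hence conditioning on acceptance leaves the law of `T_synth`
unchanged, and the overlap bounds carry over verbatim. -/

namespace ProbabilityTheory

variable {Ω : Type*} {X Y : Ω → Bool}

lemma setOf_eq_inter_setOf_eq_true :
    {ω | X ω = Y ω} ∩ {ω | Y ω = true} = {ω | X ω = true} ∩ {ω | Y ω = true} := by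
  ext ω
  cases hx : X ω <;> cases hy : Y ω <;> simp [hx, hy]

lemma setOf_eq_diff_setOf_eq_true :
    {ω | X ω = Y ω} \ {ω | Y ω = true} = {ω | X ω = false} ∩ {ω | Y ω = false} := by
  ext ω
  cases hx : X ω <;> cases hy : Y ω <;> simp [hx, hy]

variable [MeasurableSpace Ω] {μ : Measure Ω}

lemma measure_eq_false_eq_one_sub [IsProbabilityMeasure μ] (hX : Measurable X) :
    μ {ω | X ω = false} = 1 - μ {ω | X ω = true} := by
  have hcompl : {ω | X ω = false} = {ω | X ω = true}ᶜ := by ext; simp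
  rw [hcompl, prob_compl_eq_one_sub (measurableSet_eq_fun hX measurable_const)]

lemma IndepFun.measure_eq_true_inter_eq_true (hXY : IndepFun X Y μ) :
    μ ({ω | X ω = true} ∩ {ω | Y ω = true}) = μ {ω | X ω = true} * μ {ω | Y ω = true} :=
  hXY.measure_inter_preimage_eq_mul {true} {true} (measurableSet_singleton _)
    (measurableSet_singleton _)

lemma IndepFun.measure_eq_false_inter_eq_false (hXY : IndepFun X Y μ) :
    μ ({ω | X ω = false} ∩ {ω | Y ω = false}) = μ {ω | X ω = false} * μ {ω | Y ω = false} :=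
  hXY.measure_inter_preimage_eq_mul {false} {false} (measurableSet_singleton _)
    (measurableSet_singleton _)

lemma IndepFun.measure_setOf_eq (hY : Measurable Y) (hXY : IndepFun X Y μ) :
    μ {ω | X ω = Y ω} = μ {ω | X ω = true} * μ {ω | Y ω = true}
      + μ {ω | X ω = false} * μ {ω | Y ω = false} := by
  rw [← measure_inter_add_sdiff _ (measurableSet_eq_fun hY measurable_const),
    setOf_eq_inter_setOf_eq_true, setOf_eq_diff_setOf_eq_true,
    hXY.measure_eq_true_inter_eq_true, hXY.measure_eq_false_inter_eq_false]

lemma IndepFun.measure_setOf_eq_of_fair [IsProbabilityMeasure μ] (hX : Measurable X)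
    (hY : Measurable Y) (hXY : IndepFun X Y μ) (hfair : μ {ω | X ω = true} = 1 / 2) :
    μ {ω | X ω = Y ω} = 1 / 2 := by
  have hp : μ {ω | Y ω = true} ≤ 1 := prob_le_one
  rw [hXY.measure_setOf_eq hY, measure_eq_false_eq_one_sub hX, measure_eq_false_eq_one_sub hY,
    hfair, ENNReal.sub_half ENNReal.one_ne_top, ← mul_add, add_tsub_cancel_of_le hp, mul_one]

lemma IndepFun.cond_setOf_eq_apply_eq_true_of_fair [IsProbabilityMeasure μ] (hX : Measurable X)
    (hY : Measurable Y) (hXY : IndepFun X Y μ) (hfair : μ {ω | X ω = true} = 1 / 2) :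
    μ[{ω | Y ω = true} | {ω | X ω = Y ω}] = μ {ω | Y ω = true} := by
  rw [cond_apply (measurableSet_eq_fun hX hY), setOf_eq_inter_setOf_eq_true,
    hXY.measure_eq_true_inter_eq_true, hXY.measure_setOf_eq_of_fair hX hY hfair, hfair,
    ← mul_assoc, ENNReal.inv_mul_cancel (by norm_num) (by norm_num), one_mul]

end ProbabilityTheory

theorem overlap_preservation_general {Ω : Type*} [MeasurableSpace Ω]
    (μ : Measure Ω) [IsProbabilityMeasure μ]
    (Trct Tsynth : Ω → Bool)
    (hTrct : Measurable Trct) (hTsynth : Measurable Tsynth)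
    (hindep : IndepFun Trct Tsynth μ)
    (hbal : μ {ω | Trct ω = true} = 1/2)
    (ε : ℝ≥0∞)
    (hlow : ε ≤ μ {ω | Tsynth ω = true})
    (hhigh : μ {ω | Tsynth ω = true} ≤ 1 - ε) :
    ε ≤ (ProbabilityTheory.cond μ {ω | Trct ω = Tsynth ω}) {ω | Tsynth ω = true}
      ∧ (ProbabilityTheory.cond μ {ω | Trct ω = Tsynth ω}) {ω | Tsynth ω = true} ≤ 1 - ε := by
  rw [hindep.cond_setOf_eq_apply_eq_true_of_fair hTrct hTsynth hbal]
  exact ⟨hlow, hhigh⟩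

theorem overlap_preservation {Ω : Type*} [MeasurableSpace Ω]
    (μ : Measure Ω) [IsProbabilityMeasure μ]
    (Trct Tsynth : Ω → Bool)
    (hTrct : Measurable Trct) (hTsynth : Measurable Tsynth)
    (hindep : IndepFun Trct Tsynth μ)
    (hbal : μ {ω | Trct ω = true} = 1/2)
    (ε : ℝ≥0∞) (hε : 0 < ε)
    (hlow : ε ≤ μ {ω | Tsynth ω = true})
    (hhigh : μ {ω | Tsynth ω = true} ≤ 1 - ε) :
    ε ≤ (ProbabilityTheory.cond μ {ω | Trct ω = Tsynth ω}) {ω | Tsynth ω = true}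
      ∧ (ProbabilityTheory.cond μ {ω | Trct ω = Tsynth ω}) {ω | Tsynth ω = true} ≤ 1 - ε :=
  overlap_preservation_general μ Trct Tsynth hTrct hTsynth hindep hbal ε hlow hhigh
end
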